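/- Let U ∈ ℕ₊ and let i, n ∈ ℕ be integers with i + 2n + 1 ≤ 2^U. Suppose 0 ≤ x ≤ y ≤ 1 satisfy x ∈ [i/2^U, (i+1)/2^U], y ∈ [(i+2n)/2^U, (i+2n+1)/2^U], and (x+y)/2 ∈ [(i+n)/2^U, (i+n+1)/2^U]. Then i(2n+i)/2^{2U+1} ≤ R_U((x+y)/2) − (1/4)R_U(x) − (1/4)R_U(y) ≤ (i+1)/2^{U+1} ≤ 1/2; in particular this quantity lies in [0, 1/2]. -/
import Mathlib


noncomputable section

open Finset

/-- The sawtooth function `T₁`. -/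
def T1 (x : ℝ) : ℝ := if x ≤ 1 / 2 then 2 * x else 2 * (1 - x)

/-- `R_U(x) = x - ∑_{i=1}^U T_i(x)/4^i`, where `T_i = T₁∘⋯∘T₁` (`i` times). -/
def RU (U : ℕ) (x : ℝ) : ℝ := x - ∑ i ∈ Finset.Icc 1 U, T1^[i] x / 4 ^ i

/-- The approximate product `×̃_{M,U}`. -/
def aprod (M : ℝ) (U : ℕ) (x y : ℝ) : ℝ :=
  2 * M ^ 2 * (RU U ((x + y) / (2 * M)) - (1 / 4) * RU U (x / M) - (1 / 4) * RU U (y / M))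

lemma RU_succ (U : ℕ) (z : ℝ) : RU (U+1) z = z - T1 z / 2 + RU U (T1 z) / 4 := by
  induction U with
  | zero =>
      simp [RU]
      ring
  | succ U ih =>
      have h1 : RU (U+2) z = RU (U+1) z - T1^[U+2] z / 4^(U+2) := by
        unfold RU
        rw [Finset.sum_Icc_succ_top (by omega : 1 ≤ U+2)]
        ring
      have h2 : RU (U+1) (T1 z) = RU U (T1 z) - T1^[U+1] (T1 z) / 4^(U+1) := by
        unfold RU
        rw [Finset.sum_Icc_succ_top (by omega : 1 ≤ U+1)]
        ring
      have h3 : T1^[U+2] z = T1^[U+1] (T1 z) := Function.iterate_succ_apply T1 (U+1) z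
      rw [h1, ih, h2, h3]
      ring

lemma RU_interp : ∀ U : ℕ, ∀ k : ℕ, k + 1 ≤ 2^U → ∀ z : ℝ,
    (k:ℝ)/2^U ≤ z → z ≤ ((k:ℝ)+1)/2^U →
    RU U z = (2*(k:ℝ)+1)/2^U * z - (k:ℝ)*((k:ℝ)+1)/4^U := by
  intro U
  induction U with
  | zero =>
      intro k hk z h1 h2
      have hk0 : k = 0 := by omega
      subst hk0
      simp [RU] at *
  | succ U ih =>
      intro k hk z h1 h2
      have hP : (0:ℝ) < 2^U := by positivity
      have hp : 2^(U+1) = 2*2^U := by rw [pow_succ]; ring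
      have h2P : ((2:ℝ))^(U+1) = 2 * 2^U := by rw [pow_succ]; ring
      rw [h2P] at h1 h2
      have b1 : (k:ℝ) ≤ z * (2*2^U) := (div_le_iff₀ (by positivity)).mp h1
      have b2 : z * (2*2^U) ≤ (k:ℝ)+1 := (le_div_iff₀ (by positivity)).mp h2
      have h4 : (4:ℝ)^U = 2^U * 2^U := by
        rw [show (4:ℝ) = 2*2 by norm_num, mul_pow]
      by_cases hcase : k + 1 ≤ 2^U
      · -- left half: z ≤ 1/2
        have hkR : ((k:ℝ)+1) ≤ 2^U := by exact_mod_cast hcase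
        have hz2 : z ≤ 1/2 := by nlinarith
        have hT : T1 z = 2*z := if_pos hz2
        have c1 : (k:ℝ)/2^U ≤ 2*z := (div_le_iff₀ hP).mpr (by linarith)
        have c2 : 2*z ≤ ((k:ℝ)+1)/2^U := (le_div_iff₀ hP).mpr (by linarith)
        rw [RU_succ, hT, ih k hcase (2*z) c1 c2, h2P, pow_succ, h4]
        field_simp
        ring
      · -- right half: z ≥ 1/2
        have hk2 : 2^U ≤ k := by omega
        have hkR : (2:ℝ)^U ≤ (k:ℝ) := by exact_mod_cast hk2
        have hz1 : 1/2 ≤ z := by nlinarith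
        have hT : T1 z = 2*(1-z) := by
          unfold T1
          split_ifs with h
          · have hz : z = 1/2 := le_antisymm h hz1
            rw [hz]; norm_num
          · rfl
        set k' := 2^(U+1) - 1 - k with hk'def
        have hk'1 : k' + 1 ≤ 2^U := by omega
        have hsum : k' + (k+1) = 2^(U+1) := by omega
        have hk'cast : (k':ℝ) = 2*2^U - 1 - k := by
          have := congrArg (Nat.cast : ℕ → ℝ) hsum
          push_cast at this
          rw [h2P] at this
          linarith
        have c1 : (k':ℝ)/2^U ≤ 2*(1-z) := (div_le_iff₀ hP).mpr (by rw [hk'cast]; nlinarith)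
        have c2 : 2*(1-z) ≤ ((k':ℝ)+1)/2^U := (le_div_iff₀ hP).mpr (by rw [hk'cast]; nlinarith)
        rw [RU_succ, hT, ih k' hk'1 _ c1 c2, hk'cast, h2P, pow_succ, h4]
        field_simp
        ring

set_option maxHeartbeats 1000000 in
theorem stmt9 (U : ℕ) (hU : 0 < U) (i n : ℕ) (hin : i + 2 * n + 1 ≤ 2 ^ U)
    (x y : ℝ) (hx0 : 0 ≤ x) (hxy : x ≤ y) (hy1 : y ≤ 1)
    (hx : x ∈ Set.Icc ((i : ℝ) / 2 ^ U) (((i : ℝ) + 1) / 2 ^ U))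
    (hy : y ∈ Set.Icc (((i : ℝ) + 2 * n) / 2 ^ U) (((i : ℝ) + 2 * n + 1) / 2 ^ U))
    (hmid : (x + y) / 2 ∈ Set.Icc (((i : ℝ) + n) / 2 ^ U) (((i : ℝ) + n + 1) / 2 ^ U)) :
    (i : ℝ) * (2 * n + i) / 2 ^ (2 * U + 1) ≤
        RU U ((x + y) / 2) - (1 / 4) * RU U x - (1 / 4) * RU U y ∧
    RU U ((x + y) / 2) - (1 / 4) * RU U x - (1 / 4) * RU U y ≤ ((i : ℝ) + 1) / 2 ^ (U + 1) ∧
    ((i : ℝ) + 1) / 2 ^ (U + 1) ≤ 1 / 2 := by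
  have hP : (0:ℝ) < 2^U := by positivity
  have hi1 : i + 1 ≤ 2^U := by omega
  have hin1 : i + n + 1 ≤ 2^U := by omega
  have hin2 : i + 2*n + 1 ≤ 2^U := hin
  have e1 := RU_interp U i hi1 x hx.1 hx.2
  have e2 := RU_interp U (i + 2*n) hin2 y (by push_cast; exact hy.1) (by push_cast; exact hy.2)
  have e3 := RU_interp U (i + n) hin1 ((x+y)/2) (by push_cast; exact hmid.1)
      (by push_cast; exact hmid.2)
  push_cast at e2 e3
  have hx1 : (i:ℝ) ≤ x * 2^U := (div_le_iff₀ hP).mp hx.1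
  have hx2 : x * 2^U ≤ (i:ℝ)+1 := (le_div_iff₀ hP).mp hx.2
  have hy1' : (i:ℝ)+2*n ≤ y * 2^U := (div_le_iff₀ hP).mp hy.1
  have hy2' : y * 2^U ≤ (i:ℝ)+2*n+1 := (le_div_iff₀ hP).mp hy.2
  have hNc : (i:ℝ)+2*(n:ℝ)+1 ≤ 2^U := by exact_mod_cast hin
  have h4 : (4:ℝ)^U = 2^U * 2^U := by
    rw [show (4:ℝ) = 2*2 by norm_num, mul_pow]
  have h5 : (2:ℝ)^(2*U+1) = 2*(2^U*2^U) := by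
    rw [pow_succ, two_mul, pow_add]; ring
  have h6 : (2:ℝ)^(U+1) = 2*2^U := by rw [pow_succ]; ring
  have hlow : RU U ((x + y) / 2) - 1/4 * RU U x - 1/4 * RU U y
      - (i:ℝ) * (2*(n:ℝ) + i) / 2^(2*U+1)
      = ((2*(i:ℝ)+4*n+1)*(x*2^U - i) + (2*(i:ℝ)+1)*(y*2^U - (i+2*n)))/(4*(2^U*2^U)) := by
    rw [e1, e2, e3, h4, h5]
    field_simp
    ring
  have hupp : ((i:ℝ)+1)/2^(U+1)
      - (RU U ((x + y) / 2) - 1/4 * RU U x - 1/4 * RU U y)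
      = ((2*(i:ℝ)+4*n+1)*(((i:ℝ)+1) - x*2^U) + (2*(i:ℝ)+1)*(((i:ℝ)+2*n+1) - y*2^U)
          + 2*((i:ℝ)+1)*(2^U - ((i:ℝ)+2*n+1)))/(4*(2^U*2^U)) := by
    rw [e1, e2, e3, h4, h6]
    field_simp
    ring
  have hnum1 : (0:ℝ) ≤ (2*(i:ℝ)+4*n+1)*(x*2^U - i) + (2*(i:ℝ)+1)*(y*2^U - (i+2*n)) := by
    have c1 : (0:ℝ) ≤ 2*(i:ℝ)+4*n+1 := by positivity
    have c2 : (0:ℝ) ≤ 2*(i:ℝ)+1 := by positivity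
    have d1 : (0:ℝ) ≤ x*2^U - i := by linarith
    have d2 : (0:ℝ) ≤ y*2^U - ((i:ℝ)+2*n) := by linarith
    exact add_nonneg (mul_nonneg c1 d1) (mul_nonneg c2 d2)
  have hnum2 : (0:ℝ) ≤ (2*(i:ℝ)+4*n+1)*(((i:ℝ)+1) - x*2^U)
      + (2*(i:ℝ)+1)*(((i:ℝ)+2*n+1) - y*2^U) + 2*((i:ℝ)+1)*(2^U - ((i:ℝ)+2*n+1)) := by
    have c1 : (0:ℝ) ≤ 2*(i:ℝ)+4*n+1 := by positivity
    have c2 : (0:ℝ) ≤ 2*(i:ℝ)+1 := by positivity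
    have c3 : (0:ℝ) ≤ 2*((i:ℝ)+1) := by positivity
    have d1 : (0:ℝ) ≤ ((i:ℝ)+1) - x*2^U := by linarith
    have d2 : (0:ℝ) ≤ ((i:ℝ)+2*n+1) - y*2^U := by linarith
    have d3 : (0:ℝ) ≤ 2^U - ((i:ℝ)+2*n+1) := by linarith
    exact add_nonneg (add_nonneg (mul_nonneg c1 d1) (mul_nonneg c2 d2)) (mul_nonneg c3 d3)
  have hden : (0:ℝ) < 4*(2^U*2^U) := by positivity
  refine ⟨?_, ?_, ?_⟩
  · have := div_nonneg hnum1 hden.le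
    linarith [hlow, this]
  · have := div_nonneg hnum2 hden.le
    linarith [hupp, this]
  · have hiR : ((i:ℝ)+1) ≤ 2^U := by exact_mod_cast hi1
    rw [h6, div_le_iff₀ (by positivity)]
    linarith
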